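/- arXiv:1301.3393 — 2 statements merged into one kernel-verified Lean document; each statement's English description precedes it below -/
import Mathlib

section
/- In the category Rel of sets and relations, every left-invertible endomorphism is invertible: if σ, τ : A → A are relations on a set A with σ ∘ τ = id, then τ ∘ σ = id. -/
/-- In Rel, every left-invertible endomorphism of a finite set is
invertible: if σ ∘ τ = id then τ ∘ σ = id. -/
theorem stmt1 (A : Type*) [Fintype A] (σ τ : A → A → Prop)
    (h : ∀ x z : A, (∃ y : A, τ x y ∧ σ y z) ↔ x = z) :
    ∀ x z : A, (∃ y : A, σ x y ∧ τ y z) ↔ x = z := by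
  have uniq : ∀ x y z, τ x y → σ y z → x = z := fun x y z ht hs => (h x z).mp ⟨y, ht, hs⟩
  choose f hf1 hf2 using fun x => ((h x x).mpr rfl)
  have finj : Function.Injective f := fun a b hab => uniq a (f b) b (hab ▸ hf1 a) (hf2 b)
  have fsurj : Function.Surjective f := Finite.surjective_of_injective finj
  intro x z
  constructor
  · rintro ⟨y, hs, ht⟩
    obtain ⟨b, rfl⟩ := fsurj y
    obtain ⟨c, rfl⟩ := fsurj x
    obtain ⟨d, rfl⟩ := fsurj z
    have h1 : c = f b := uniq c (f c) (f b) (hf1 c) hs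
    have h2 : f b = d := uniq (f b) (f d) d ht (hf2 d)
    rw [h1, h2]
  · rintro rfl
    obtain ⟨w, rfl⟩ := fsurj x
    exact ⟨w, hf2 w, hf1 w⟩
end

section
/- Every unit morphism η : 1 → S × S witnessing a self-duality of a finite set S in Rel is of the form η = {(*, (s, π(s))) : s ∈ S} for some permutation π of S. -/
/-- Every unit morphism η : 1 → S × S witnessing a self-duality of a
finite set S in Rel (i.e. admitting a counit ε satisfying the snake equations) is
of the form {(s, π s) : s ∈ S} for some permutation π of S. -/
theorem stmt4 (S : Type*) [Fintype S] (η : S × S → Prop)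
    (hdual : ∃ ε : S × S → Prop,
      (∀ a b : S, (∃ t : S × S, η t ∧ ε (a, t.1) ∧ t.2 = b) ↔ a = b) ∧
        (∀ a b : S, (∃ t : S × S, η t ∧ ε (t.2, a) ∧ t.1 = b) ↔ a = b)) :
    ∃ π : Equiv.Perm S, ∀ s t : S, η (s, t) ↔ t = π s := by
  classical
  obtain ⟨ε, h1, h2⟩ := hdual
  -- totality from snake 2
  have htot : ∀ a : S, ∃ u : S, η (a, u) ∧ ε (u, a) := by
    intro a
    obtain ⟨⟨x, y⟩, ht, he, h1t⟩ := (h2 a a).mpr rfl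
    subst h1t
    exact ⟨y, ht, he⟩
  -- uniqueness: η is single-valued
  have huniq : ∀ s t t' : S, η (s, t) → η (s, t') → t = t' := by
    intro s t t' ht ht'
    obtain ⟨u, hu, heu⟩ := htot s
    have e1 : u = t := (h1 u t).mp ⟨(s, t), ht, heu, rfl⟩
    have e2 : u = t' := (h1 u t').mp ⟨(s, t'), ht', heu, rfl⟩
    exact e1 ▸ e2
  -- injectivity
  have hinj : ∀ s s' t : S, η (s, t) → η (s', t) → s = s' := by
    intro s s' t ht ht'
    obtain ⟨⟨v1, v2⟩, hv, hev, h1v⟩ := (h1 t t).mpr rfl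
    have e1 : v1 = s := (h2 v1 s).mp ⟨(s, t), ht, hev, rfl⟩
    have e2 : v1 = s' := (h2 v1 s').mp ⟨(s', t), ht', hev, rfl⟩
    exact e1 ▸ e2
  set f : S → S := fun a => (htot a).choose with hf
  have hfη : ∀ a, η (a, f a) := fun a => (htot a).choose_spec.1
  have hfinj : Function.Injective f := fun a b hab =>
    hinj a b (f a) (hfη a) (hab ▸ hfη b)
  refine ⟨Equiv.ofBijective f (Finite.injective_iff_bijective.mp hfinj), fun s t => ?_⟩
  constructor
  · intro h
    exact huniq s t (f s) h (hfη s)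
  · rintro rfl
    exact hfη s
end
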